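/- arXiv:2209.05686 — 4 statements merged into one kernel-verified Lean document; each statement's English description precedes it below -/
import Mathlib

section
/- Let α be a type, a : α, m : ℕ, and n : Fin m → ℕ. Consider the ordered product language L = (List.ofFn (fun i : Fin m => ({[a]} : Language α) ^ (n i) + 1)).prod, i.e. the concatenation, in order of increasing index, of the languages ({[a]}^{n i} + 1) where 1 denotes the language containing only the empty word. Then for every word w : List α, w ∈ L if and only if there exists a Finset s of Fin m such that w = List.replicate (∑ i in s, n i) a. (This is the core counting fact behind the paper's reduction from Subset-Sum: the optional repetitions (a{n₁}+ε)⋯(a{n_m}+ε) match exactly the words a^x with x a subset sum of {n₁,…,n_m}.) -/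
/-!
Each factor `{[a]} ^ k + 1` is the unary language `{aʲ | j ∈ {k, 0}}`, and `S ↦ {aʲ | j ∈ S}`
turns pointwise sums of sets of naturals into concatenations of languages, since
`aⁱ ++ aʲ = aⁱ⁺ʲ`. Hence the product language is the unary language of `∑ i, {n i, 0}`,
and this pointwise sum is exactly the set of subset sums of `n`.
-/

open scoped Pointwise

theorem Set.sum_pair_zero_eq_range_sum {ι M : Type*} [Fintype ι] [AddCommMonoid M] (f : ι → M) :
    ∑ i, ({f i, 0} : Set M) = Set.range fun s : Finset ι => ∑ i ∈ s, f i := by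
  classical
  ext x
  rw [Set.mem_fintype_sum, Set.mem_range]
  constructor
  · rintro ⟨g, hg, rfl⟩
    refine ⟨({i | g i = f i} : Finset ι), ?_⟩
    rw [Finset.sum_filter]
    refine Finset.sum_congr rfl fun i _ => ?_
    split_ifs with hi
    · exact hi.symm
    · exact ((hg i).resolve_left hi).symm
  · rintro ⟨s, rfl⟩
    refine ⟨fun i => if i ∈ s then f i else 0, fun i => ?_, ?_⟩
    · by_cases hi : i ∈ s <;> simp [hi]
    · rw [Finset.sum_ite_mem, Finset.univ_inter]

namespace Language

variable {α : Type*}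

def unaryOf (a : α) (S : Set ℕ) : Language α := (List.replicate · a) '' S

theorem mem_unaryOf {a : α} {S : Set ℕ} {w : List α} :
    w ∈ unaryOf a S ↔ ∃ k ∈ S, List.replicate k a = w :=
  Iff.rfl

theorem unaryOf_singleton (a : α) (k : ℕ) : unaryOf a {k} = {List.replicate k a} :=
  Set.image_singleton

theorem unaryOf_union (a : α) (S T : Set ℕ) : unaryOf a (S ∪ T) = unaryOf a S + unaryOf a T :=
  Set.image_union _ _ _

theorem unaryOf_add (a : α) (S T : Set ℕ) : unaryOf a (S + T) = unaryOf a S * unaryOf a T :=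
  (congrArg _ Set.image2_add.symm).trans
    (Set.image_image2_distrib fun _ _ => List.replicate_add ..)

theorem unaryOf_zero (a : α) : unaryOf a 0 = 1 := by
  rw [← Set.singleton_zero, unaryOf_singleton]
  rfl

theorem unaryOf_list_sum (a : α) (l : List (Set ℕ)) :
    unaryOf a l.sum = (l.map (unaryOf a)).prod := by
  induction l with
  | nil => exact unaryOf_zero a
  | cons S l ih => rw [List.sum_cons, List.map_cons, List.prod_cons, unaryOf_add, ih]

theorem singleton_pow (a : α) (k : ℕ) : ({[a]} : Language α) ^ k = unaryOf a {k} := by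
  induction k with
  | zero => rw [pow_zero, Set.singleton_zero, unaryOf_zero]
  | succ k ih =>
    rw [pow_succ, ih, ← Set.singleton_add_singleton, unaryOf_add, unaryOf_singleton a 1]
    rfl

theorem singleton_pow_add_one (a : α) (k : ℕ) :
    ({[a]} : Language α) ^ k + 1 = unaryOf a {k, 0} := by
  rw [singleton_pow, Set.insert_eq, unaryOf_union, Set.singleton_zero, unaryOf_zero]

end Language

theorem stmt_0 {α : Type*} (a : α) (m : ℕ) (n : Fin m → ℕ) (w : List α) :
    w ∈ (List.ofFn (fun i : Fin m => ({[a]} : Language α) ^ (n i) + 1)).prod ↔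
      ∃ s : Finset (Fin m), w = List.replicate (∑ i ∈ s, n i) a := by
  have hfactors : (List.ofFn fun i => ({[a]} : Language α) ^ (n i) + 1) =
      (List.ofFn fun i => ({n i, 0} : Set ℕ)).map (Language.unaryOf a) := by
    simp only [List.map_ofFn, Function.comp_def, Language.singleton_pow_add_one]
  rw [hfactors, ← Language.unaryOf_list_sum, List.sum_ofFn, Set.sum_pair_zero_eq_range_sum,
    Language.mem_unaryOf]
  exact Set.exists_range_iff.trans (exists_congr fun _ => eq_comm)
end

section
/- Let M be an NFA over alphabet α with state type σ, f : σ → Q a function, q : Q, and d : ℕ. Then the following are equivalent: (1) there exists a word w with d ≤ ({s ∈ M.eval w | f s = q}).encard; (2) there exists a word w and an injective function t : Fin d → σ such that t lies in the eval on w of the d-fold product NFA (with state type Fin d → σ, start {s | ∀ i, s i ∈ M.start}, step s a = {u | ∀ i, u i ∈ M.step (s i) a}) and f (t i) = q for every i. (This is the paper's characterization: a state q has degree of counter-ambiguity at least d iff there exists a path in the d-fold product Gᵈ ending with a tuple ⟨(q,β₁),…,(q,β_d)⟩ where β₁,…,β_d are all distinct.) -/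
lemma prod_stepSet {α σ : Type*} {d : ℕ} (M : NFA α σ) (P : NFA α (Fin d → σ))
    (hstep : ∀ (s : Fin d → σ) (a : α),
      P.step s a = {u | ∀ i, u i ∈ M.step (s i) a})
    (S : Set σ) (a : α) :
    P.stepSet {s | ∀ i, s i ∈ S} a = {t | ∀ i, t i ∈ M.stepSet S a} := by
  ext t
  simp only [NFA.stepSet, Set.mem_iUnion, Set.mem_setOf_eq, hstep]
  constructor
  · rintro ⟨s, hs, ht⟩ i
    exact ⟨s i, hs i, ht i⟩
  · intro h
    choose s hs ht using h
    exact ⟨s, hs, ht⟩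

lemma prod_evalFrom {α σ : Type*} {d : ℕ} (M : NFA α σ) (P : NFA α (Fin d → σ))
    (hstep : ∀ (s : Fin d → σ) (a : α),
      P.step s a = {u | ∀ i, u i ∈ M.step (s i) a})
    (S : Set σ) (w : List α) :
    P.evalFrom {s | ∀ i, s i ∈ S} w = {t | ∀ i, t i ∈ M.evalFrom S w} := by
  induction w generalizing S with
  | nil => simp [NFA.evalFrom]
  | cons a w ih =>
    rw [NFA.evalFrom, List.foldl_cons, ← NFA.evalFrom,
        prod_stepSet M P hstep S a, ih]
    simp [NFA.evalFrom]

theorem stmt_5 {α σ Q : Type*} (M : NFA α σ) (f : σ → Q) (q : Q) (d : ℕ)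
    (P : NFA α (Fin d → σ))
    (hstart : P.start = {s | ∀ i, s i ∈ M.start})
    (hstep : ∀ (s : Fin d → σ) (a : α),
      P.step s a = {u | ∀ i, u i ∈ M.step (s i) a}) :
    (∃ w : List α, (d : ℕ∞) ≤ {s ∈ M.eval w | f s = q}.encard) ↔
      (∃ (w : List α) (t : Fin d → σ), Function.Injective t ∧
        t ∈ P.eval w ∧ ∀ i, f (t i) = q) := by
  have heval : ∀ w, P.eval w = {t | ∀ i, t i ∈ M.eval w} := by
    intro w
    rw [NFA.eval, hstart, prod_evalFrom M P hstep]
    rfl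
  constructor
  · rintro ⟨w, hw⟩
    obtain ⟨T, hTsub, hTcard⟩ := Set.exists_subset_encard_eq hw
    have hfin : T.Finite := Set.finite_of_encard_eq_coe hTcard
    have : Fintype T := hfin.fintype
    have hcard : Fintype.card T = d := by
      have := hTcard
      rw [Set.encard_eq_coe_toFinset_card] at this
      simpa using Nat.cast_injective this
    let e : Fin d ≃ T := (Fintype.equivFinOfCardEq hcard).symm
    refine ⟨w, fun i => (e i : σ), ?_, ?_, ?_⟩
    · intro i j hij
      exact e.injective (Subtype.ext hij)
    · rw [heval]
      intro i
      exact (hTsub (e i).2).1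
    · intro i
      exact (hTsub (e i).2).2
  · rintro ⟨w, t, hinj, hmem, hq⟩
    refine ⟨w, ?_⟩
    rw [heval] at hmem
    have hsub : Set.range t ⊆ {s ∈ M.eval w | f s = q} := by
      rintro _ ⟨i, rfl⟩
      exact ⟨hmem i, hq i⟩
    calc (d : ℕ∞) = (Set.range t).encard := by
            rw [← Set.image_univ, hinj.encard_image,
                Set.encard_univ]
            simp
      _ ≤ _ := Set.encard_mono hsub
end

section
/- Let α be a type, σ : Set α, and n : ℕ. Define the NFA M over α with state type Option (Fin n), start = {none}, any accept set, and step given by: step none a = {none} ∪ (if a ∈ σ then {some 0} else ∅), and step (some i) a = if a ∈ σ ∧ i.val + 1 < n then {some ⟨i.val + 1, _⟩} else ∅ (here none represents the control state q₁ carrying the Σ-self-loop and some i represents the token (q₂, i+1) of the counter automaton for Σ*σ{n}). Then for every c ∈ σ and every k ≤ n, M.eval (List.replicate k c) = {none} ∪ {some i | i : Fin n, i.val < k}. (This computes the configurations of the token transition system of the paper's counter automaton for Σ*σ{n} on inputs from σ: after reading k letters of σ, tokens with all counter values 1,…,k are simultaneously active.) -/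
open Classical in
/-- The token transition system of the counter automaton for `Σ* σ{n}`:
`none` is the state `q₁` with the `Σ`-self-loop, and `some i` is the token
`(q₂, i+1)`. -/
noncomputable def counterNFA {α : Type*} (σ : Set α) (n : ℕ) [NeZero n]
    (accept : Set (Option (Fin n))) : NFA α (Option (Fin n)) where
  start := {none}
  accept := accept
  step s a :=
    match s with
    | none => {none} ∪ (if a ∈ σ then {some 0} else ∅)
    | some i =>
        if h : a ∈ σ ∧ i.val + 1 < n then {some ⟨i.val + 1, h.2⟩} else ∅

/- The configuration after `k` letters of `σ`: `q₁` and the tokens `(q₂, 1), …, (q₂, k)`, where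
counters beyond `n` simply do not exist. -/
def activeStates (n k : ℕ) : Set (Option (Fin n)) :=
  {none} ∪ {s | ∃ i : Fin n, i.val < k ∧ s = some i}

theorem none_mem_activeStates (n k : ℕ) : none ∈ activeStates n k := Or.inl rfl

theorem some_mem_activeStates {n k : ℕ} {j : Fin n} : some j ∈ activeStates n k ↔ j.val < k := by
  simp [activeStates]

namespace counterNFA

variable {α : Type*} {σ : Set α} {n : ℕ} [NeZero n] {accept : Set (Option (Fin n))} {a : α}

theorem step_none (ha : a ∈ σ) : (counterNFA σ n accept).step none a = {none, some 0} := by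
  simp only [counterNFA, if_pos ha]
  exact Set.singleton_union

theorem mem_step_some (ha : a ∈ σ) {i : Fin n} {s : Option (Fin n)} :
    s ∈ (counterNFA σ n accept).step (some i) a ↔
      ∃ j : Fin n, j.val = i.val + 1 ∧ s = some j := by
  simp only [counterNFA]
  split_ifs with h
  · refine ⟨fun hs => ⟨_, rfl, hs⟩, ?_⟩
    rintro ⟨j, hj, rfl⟩
    simp [Fin.ext_iff, hj]
  · simp only [Set.mem_empty_iff_false, false_iff, not_exists, not_and]
    intro j hj
    exact absurd ⟨ha, hj ▸ j.isLt⟩ h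

/- A letter of `σ` spawns the token `(q₂, 1)` from `q₁` and advances every token, the one at `n`
dying. -/
theorem stepSet_activeStates (ha : a ∈ σ) (k : ℕ) :
    (counterNFA σ n accept).stepSet (activeStates n k) a = activeStates n (k + 1) := by
  ext s
  rw [NFA.mem_stepSet]
  rcases s with _ | j
  · exact iff_of_true ⟨none, none_mem_activeStates n k, by simp [step_none ha]⟩
      (none_mem_activeStates n (k + 1))
  rw [some_mem_activeStates]
  constructor
  · rintro ⟨_ | i, ht, hj⟩
    · simp [step_none ha] at hj
      simp [hj]
    · obtain ⟨j', hj', hjj'⟩ := (mem_step_some ha).1 hj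
      cases Option.some.inj hjj'
      rw [some_mem_activeStates] at ht
      omega
  · intro hj
    cases h : j.val with
    | zero => exact ⟨none, none_mem_activeStates n k, by simp [step_none ha, Fin.ext_iff, h]⟩
    | succ m =>
      have hm : m < n := by omega
      exact ⟨some ⟨m, hm⟩, some_mem_activeStates.2 (show m < k by omega),
        (mem_step_some ha).2 ⟨j, h, rfl⟩⟩

theorem eval_replicate {c : α} (hc : c ∈ σ) (k : ℕ) :
    (counterNFA σ n accept).eval (List.replicate k c) = activeStates n k := by
  induction k with
  | zero => ext s; simp [activeStates, counterNFA]
  | succ k ih =>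
    rw [List.replicate_succ', NFA.eval_append_singleton, ih, stepSet_activeStates hc]

end counterNFA

theorem stmt_13_general {α : Type*} (σ : Set α) (n : ℕ) [NeZero n]
    (accept : Set (Option (Fin n)))
    (c : α) (hc : c ∈ σ) (k : ℕ) :
    (counterNFA σ n accept).eval (List.replicate k c) =
      {none} ∪ {s | ∃ i : Fin n, i.val < k ∧ s = some i} :=
  counterNFA.eval_replicate hc k

theorem stmt_13 {α : Type*} (σ : Set α) (n : ℕ) [NeZero n]
    (accept : Set (Option (Fin n)))
    (c : α) (hc : c ∈ σ) (k : ℕ) (hk : k ≤ n) :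
    (counterNFA σ n accept).eval (List.replicate k c) =
      {none} ∪ {s | ∃ i : Fin n, i.val < k ∧ s = some i} :=
  stmt_13_general σ n accept c hc k
end

section
/- Let α be a type, σ : Set α a nonempty set, and n : ℕ with n ≥ 2. Define the NFA M over α with state type Option (Fin n), start = {none}, any accept set, and step given by: step none a = {none} ∪ (if a ∈ σ then {some 0} else ∅), and step (some i) a = if a ∈ σ ∧ i.val + 1 < n then {some ⟨i.val + 1, _⟩} else ∅. Then there exists a word w : List α such that {i : Fin n | some i ∈ M.eval w} = Set.univ; in particular there exist a word w and two distinct states some i ≠ some j both in M.eval w. -/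
lemma counterNFA_key {α : Type*} (σ : Set α) {a : α} (ha : a ∈ σ) (n : ℕ) [NeZero n]
    (accept : Set (Option (Fin n))) (k : ℕ) :
    none ∈ (counterNFA σ n accept).eval (List.replicate k a) ∧
      ∀ i : Fin n, i.val < k →
        some i ∈ (counterNFA σ n accept).eval (List.replicate k a) := by
  induction k with
  | zero =>
    constructor
    · rfl
    · intro i hi; omega
  | succ k ih =>
    have hrep : List.replicate (k+1) a = List.replicate k a ++ [a] := by
      rw [List.replicate_succ']
    have heval : (counterNFA σ n accept).eval (List.replicate (k+1) a)
        = (counterNFA σ n accept).stepSet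
            ((counterNFA σ n accept).eval (List.replicate k a)) a := by
      rw [hrep]
      simp [NFA.eval, NFA.evalFrom]
    rw [heval]
    constructor
    · exact NFA.mem_stepSet.mpr ⟨none, ih.1, by simp [counterNFA]⟩
    · intro i hi
      rcases Nat.eq_zero_or_pos i.val with h0 | hpos
      · refine NFA.mem_stepSet.mpr ⟨none, ih.1, ?_⟩
        have : i = 0 := Fin.ext h0
        simp [counterNFA, ha, this]
      · obtain ⟨j, hj⟩ := Nat.exists_eq_succ_of_ne_zero hpos.ne'
        have hin := i.isLt
        have hjn : j + 1 < n := by omega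
        have hjk : j < k := by omega
        refine NFA.mem_stepSet.mpr ⟨some ⟨j, by omega⟩, ih.2 ⟨j, by omega⟩ hjk, ?_⟩
        have : i = ⟨j + 1, hjn⟩ := Fin.ext hj
        simp [counterNFA, ha, hjn, this]

theorem stmt_14 {α : Type*} (σ : Set α) (hσ : σ.Nonempty) (n : ℕ) [NeZero n]
    (hn : 2 ≤ n) (accept : Set (Option (Fin n))) :
    (∃ w : List α,
        {i : Fin n | some i ∈ (counterNFA σ n accept).eval w} = Set.univ) ∧
      ∃ (w : List α) (i j : Fin n), some i ≠ some j ∧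
        some i ∈ (counterNFA σ n accept).eval w ∧
        some j ∈ (counterNFA σ n accept).eval w := by
  obtain ⟨a, ha⟩ := hσ
  have key := counterNFA_key σ ha n accept n
  constructor
  · exact ⟨List.replicate n a, Set.eq_univ_of_forall fun i => key.2 i i.isLt⟩
  · refine ⟨List.replicate n a, ⟨0, by omega⟩, ⟨1, by omega⟩, by simp, ?_, ?_⟩
    · exact key.2 _ (by simpa using Nat.pos_of_ne_zero (NeZero.ne n))
    · exact key.2 _ (by simp; omega)
end
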